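/- For any τ > 0 and any matrix Y ∈ R^{m×n} with singular value decomposition Y = U Σ Vᵀ, the matrix D_τ(Y) = U diag(max(σ_i - τ, 0)) Vᵀ is the unique minimizer of Z ↦ τ‖Z‖_* + (1/2)‖Z - Y‖_F². -/

import Mathlib

/-!
Put `W = U T Vᵀ` and `G = τ⁻¹ (Y - W) = U D Vᵀ`, where `D` is rectangular diagonal with entries
`min(σᵢ, τ) / τ ∈ [0, 1]`. Then `‖G‖₂ ≤ 1`, so `⟨G, Z⟩ ≤ ‖Z‖_*` for every `Z` (expand the trace in
an orthonormal eigenbasis of `ZᵀZ` and use Cauchy–Schwarz column by column), while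
`⟨G, W⟩ = ∑ max(σᵢ - τ, 0) = ‖W‖_*` because the nuclear norm only sees the spectrum of `WᵀW`.
So `G` is a subgradient of the nuclear norm at `W`, and expanding `‖Z - Y‖_F²` around `W` shows
that the objective at `Z` exceeds its value at `W` by at least `½ ‖Z - W‖_F²`: this gives
optimality and uniqueness at once.
-/

open Matrix

/-- Squared Frobenius norm. -/
def frobSq {m n : ℕ} (M : Matrix (Fin m) (Fin n) ℝ) : ℝ := ∑ i, ∑ j, (M i j) ^ 2

/-- Nuclear norm: sum of the singular values, i.e. of the square roots of the
eigenvalues of `AᴴA`. -/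
noncomputable def nuclearNorm {m n : ℕ} (A : Matrix (Fin m) (Fin n) ℝ) : ℝ :=
  ∑ i, Real.sqrt ((Matrix.posSemidef_conjTranspose_mul_self A).1.eigenvalues i)

namespace Matrix

theorem trace_transpose_mul_eq_sum {ι κ : Type*} [Fintype ι] [Fintype κ] (A B : Matrix ι κ ℝ) :
    (Aᵀ * B).trace = ∑ i, ∑ j, A i j * B i j := by
  simp only [trace, diag, mul_apply, transpose_apply]
  exact Finset.sum_comm

theorem transpose_mul_apply_le_sqrt_mul_sqrt {ι κ : Type*} [Fintype ι]
    (P R : Matrix ι κ ℝ) (j k : κ) :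
    (Pᵀ * R) j k ≤ √((Pᵀ * P) j j) * √((Rᵀ * R) k k) := by
  simpa only [mul_apply, transpose_apply, sq] using
    Real.sum_mul_le_sqrt_mul_sqrt Finset.univ (fun i => P i j) (fun i => R i k)

theorem transpose_mul_orthogonal_conj {ι κ R : Type*} [Fintype ι] [Fintype κ] [DecidableEq ι]
    [CommRing R] {U : Matrix ι ι R} (hU : Uᵀ * U = 1) (V : Matrix κ κ R) (A B : Matrix ι κ R) :
    (U * A * Vᵀ)ᵀ * (U * B * Vᵀ) = V * (Aᵀ * B) * Vᵀ := by
  simp only [transpose_mul, transpose_transpose, Matrix.mul_assoc]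
  rw [← Matrix.mul_assoc Uᵀ, hU, Matrix.one_mul]

theorem posSemidef_one_sub_transpose_mul_self_orthogonal_conj {ι κ : Type*} [Fintype ι]
    [Fintype κ] [DecidableEq ι] [DecidableEq κ] {U : Matrix ι ι ℝ} (hU : Uᵀ * U = 1)
    {V : Matrix κ κ ℝ} (hV : Vᵀ * V = 1) {D : Matrix ι κ ℝ} (hD : (1 - Dᵀ * D).PosSemidef) :
    (1 - (U * D * Vᵀ)ᵀ * (U * D * Vᵀ)).PosSemidef := by
  have hV' : V * Vᵀ = 1 := mul_eq_one_comm.mp hV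
  have hconj : 1 - V * (Dᵀ * D) * Vᵀ = V * (1 - Dᵀ * D) * Vᵀ := by
    rw [Matrix.mul_sub, Matrix.sub_mul, Matrix.mul_one, hV']
  rw [transpose_mul_orthogonal_conj hU, hconj]
  simpa using hD.mul_mul_conjTranspose_same V

def IsRectDiag {R : Type*} [Zero R] {m n : ℕ} (A : Matrix (Fin m) (Fin n) R) : Prop :=
  ∀ (i : Fin m) (j : Fin n), (i : ℕ) ≠ (j : ℕ) → A i j = 0

namespace IsRectDiag

variable {R : Type*} [Zero R] {m n : ℕ} {A : Matrix (Fin m) (Fin n) R}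

theorem sum_apply_comp (hA : A.IsRectDiag) {M : Type*} [AddCommMonoid M] {g : R → M}
    (hg : g 0 = 0) (j : Fin n) :
    ∑ i, g (A i j) = if h : (j : ℕ) < m then g (A ⟨j, h⟩ j) else 0 := by
  split_ifs with h
  · refine Finset.sum_eq_single_of_mem _ (Finset.mem_univ _) fun i _ hi => ?_
    rw [hA i j (fun hij => hi (Fin.ext hij)), hg]
  · refine Finset.sum_eq_zero fun i _ => ?_
    rw [hA i j (fun hij => h (hij ▸ i.isLt)), hg]

theorem transpose_mul_self {A : Matrix (Fin m) (Fin n) ℝ} (hA : A.IsRectDiag) :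
    Aᵀ * A = diagonal fun j => ∑ i, A i j ^ 2 := by
  ext j k
  rcases eq_or_ne j k with rfl | hjk
  · simp [mul_apply, sq]
  · rw [diagonal_apply_ne _ hjk, mul_apply]
    refine Finset.sum_eq_zero fun i _ => ?_
    by_cases hij : (i : ℕ) = j
    · rw [transpose_apply, hA i k (fun hik => hjk (Fin.ext (hij ▸ hik))), mul_zero]
    · rw [transpose_apply, hA i j hij, zero_mul]

theorem posSemidef_one_sub_transpose_mul_self {A : Matrix (Fin m) (Fin n) ℝ}
    (hA : A.IsRectDiag) (h1 : ∀ i j, |A i j| ≤ 1) : (1 - Aᵀ * A).PosSemidef := by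
  rw [hA.transpose_mul_self, ← diagonal_one, diagonal_sub, posSemidef_diagonal_iff]
  intro j
  have hsq : ∑ i, A i j ^ 2 = _ := hA.sum_apply_comp (g := (· ^ 2)) (zero_pow two_ne_zero) j
  rw [sub_nonneg, hsq]
  split_ifs with h
  · exact sq_le_one_iff_abs_le_one _ |>.mpr (h1 _ _)
  · exact zero_le_one

end IsRectDiag

end Matrix

section

variable {m n : ℕ}

theorem frobSq_eq_trace (A : Matrix (Fin m) (Fin n) ℝ) : frobSq A = (Aᵀ * A).trace := by
  simp only [frobSq, trace_transpose_mul_eq_sum, sq]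

theorem frobSq_add (A B : Matrix (Fin m) (Fin n) ℝ) :
    frobSq (A + B) = frobSq A + 2 * (Aᵀ * B).trace + frobSq B := by
  have hsymm : (Bᵀ * A).trace = (Aᵀ * B).trace := by
    rw [← trace_transpose, transpose_mul, transpose_transpose]
  simp only [frobSq_eq_trace, transpose_add, Matrix.add_mul, Matrix.mul_add, trace_add, hsymm]
  ring

theorem frobSq_nonneg (A : Matrix (Fin m) (Fin n) ℝ) : 0 ≤ frobSq A := by
  unfold frobSq
  positivity

theorem frobSq_eq_zero_iff {A : Matrix (Fin m) (Fin n) ℝ} : frobSq A = 0 ↔ A = 0 := by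
  simpa [frobSq_eq_trace] using trace_conjTranspose_mul_self_eq_zero_iff (A := A)

theorem add_half_frobSq_le_of_subgradient (N : Matrix (Fin m) (Fin n) ℝ → ℝ) {τ : ℝ}
    (hτ : 0 ≤ τ) {G W Y : Matrix (Fin m) (Fin n) ℝ} (hG : ∀ Z, (Gᵀ * Z).trace ≤ N Z)
    (hGW : (Gᵀ * W).trace = N W) (hYW : Y - W = τ • G) (Z : Matrix (Fin m) (Fin n) ℝ) :
    τ * N W + 1 / 2 * frobSq (W - Y) + 1 / 2 * frobSq (Z - W) ≤
      τ * N Z + 1 / 2 * frobSq (Z - Y) := by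
  have hcross : ((Z - W)ᵀ * (W - Y)).trace = -τ * ((Gᵀ * Z).trace - (Gᵀ * W).trace) := by
    rw [← neg_sub Y W, hYW, ← trace_transpose, transpose_mul]
    simp only [transpose_neg, transpose_smul, transpose_sub, transpose_transpose,
      Matrix.mul_sub, Matrix.neg_mul, smul_mul, trace_sub, trace_neg, trace_smul, smul_eq_mul]
    ring
  have hexpand : frobSq (Z - Y) =
      frobSq (Z - W) + 2 * ((Z - W)ᵀ * (W - Y)).trace + frobSq (W - Y) := by
    rw [← frobSq_add, sub_add_sub_cancel]
  nlinarith [mul_le_mul_of_nonneg_left (hG Z) hτ]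

theorem nuclearNorm_eq_sum_sqrt_roots (A : Matrix (Fin m) (Fin n) ℝ) :
    nuclearNorm A = ((Aᵀ * A).charpoly.roots.map Real.sqrt).sum := by
  rw [← conjTranspose_eq_transpose_of_trivial,
    (posSemidef_conjTranspose_mul_self A).1.roots_charpoly_eq_eigenvalues, Multiset.map_map]
  rfl

theorem nuclearNorm_orthogonal_conj {U : Matrix (Fin m) (Fin m) ℝ} (hU : Uᵀ * U = 1)
    {V : Matrix (Fin n) (Fin n) ℝ} (hV : Vᵀ * V = 1) (A : Matrix (Fin m) (Fin n) ℝ) :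
    nuclearNorm (U * A * Vᵀ) = nuclearNorm A := by
  rw [nuclearNorm_eq_sum_sqrt_roots, nuclearNorm_eq_sum_sqrt_roots,
    transpose_mul_orthogonal_conj hU, charpoly_mul_comm, ← Matrix.mul_assoc, hV, Matrix.one_mul]

theorem nuclearNorm_eq_of_transpose_mul_self_eq_diagonal {A : Matrix (Fin m) (Fin n) ℝ}
    {d : Fin n → ℝ} (hA : Aᵀ * A = diagonal d) : nuclearNorm A = ∑ j, √(d j) := by
  rw [nuclearNorm_eq_sum_sqrt_roots, hA, charpoly_diagonal, Polynomial.roots_prod _ _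
    (Finset.prod_ne_zero_iff.mpr fun j _ => Polynomial.X_sub_C_ne_zero (d j))]
  simp [Finset.sum_eq_multiset_sum, Function.comp_def]

theorem Matrix.IsRectDiag.nuclearNorm_eq {A : Matrix (Fin m) (Fin n) ℝ} (hA : A.IsRectDiag) :
    nuclearNorm A = ∑ i, ∑ j, |A i j| := by
  rw [nuclearNorm_eq_of_transpose_mul_self_eq_diagonal hA.transpose_mul_self, Finset.sum_comm]
  refine Finset.sum_congr rfl fun j _ => ?_
  have hsq : ∑ i, A i j ^ 2 = _ := hA.sum_apply_comp (g := (· ^ 2)) (zero_pow two_ne_zero) j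
  rw [hsq, hA.sum_apply_comp abs_zero]
  split_ifs
  · exact Real.sqrt_sq_eq_abs _
  · exact Real.sqrt_zero

theorem trace_transpose_mul_le_nuclearNorm {G : Matrix (Fin m) (Fin n) ℝ}
    (hG : (1 - Gᵀ * G).PosSemidef) (Z : Matrix (Fin m) (Fin n) ℝ) :
    (Gᵀ * Z).trace ≤ nuclearNorm Z := by
  set hH := (posSemidef_conjTranspose_mul_self Z).1
  set Q : Matrix (Fin n) (Fin n) ℝ := (hH.eigenvectorUnitary : Matrix (Fin n) (Fin n) ℝ)
  have hQQ : Qᵀ * Q = 1 := Unitary.coe_star_mul_self hH.eigenvectorUnitary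
  have hQQ' : Q * Qᵀ = 1 := Unitary.coe_mul_star_self hH.eigenvectorUnitary
  have hZQ : (Z * Q)ᵀ * (Z * Q) = diagonal hH.eigenvalues := by
    have h := hH.conjStarAlgAut_star_eigenvectorUnitary
    rw [Unitary.conjStarAlgAut_star_apply] at h
    rw [transpose_mul, Matrix.mul_assoc, ← Matrix.mul_assoc Zᵀ, ← Matrix.mul_assoc]
    exact h
  have hGQ (i : Fin n) : ((G * Q)ᵀ * (G * Q)) i i ≤ 1 := by
    have := (hG.conjTranspose_mul_mul_same Q).diag_nonneg (i := i)
    simpa [Matrix.mul_sub, Matrix.sub_mul, hQQ, Matrix.mul_assoc] using this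
  calc (Gᵀ * Z).trace = ((G * Q)ᵀ * (Z * Q)).trace := by
        rw [transpose_mul, Matrix.mul_assoc, trace_mul_comm Qᵀ, Matrix.mul_assoc,
          Matrix.mul_assoc, hQQ', Matrix.mul_one]
    _ ≤ ∑ i, √(((G * Q)ᵀ * (G * Q)) i i) * √(((Z * Q)ᵀ * (Z * Q)) i i) :=
        Finset.sum_le_sum fun i _ => transpose_mul_apply_le_sqrt_mul_sqrt _ _ i i
    _ ≤ nuclearNorm Z := by
        refine Finset.sum_le_sum fun i _ => ?_
        rw [hZQ, diagonal_apply_eq]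
        exact mul_le_of_le_one_left (Real.sqrt_nonneg _) (Real.sqrt_le_one.mpr (hGQ i))

theorem abs_inv_mul_sub_max_sub_le_one {s τ : ℝ} (hs : 0 ≤ s) (hτ : 0 < τ) :
    |τ⁻¹ * (s - max (s - τ) 0)| ≤ 1 := by
  rw [abs_le]
  rcases le_total s τ with h | h
  · rw [max_eq_right (by linarith), sub_zero]
    constructor
    · nlinarith [inv_pos.mpr hτ]
    · rwa [inv_mul_le_iff₀ hτ, mul_one]
  · rw [max_eq_left (by linarith), sub_sub_cancel, inv_mul_cancel₀ hτ.ne']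
    norm_num

theorem inv_mul_sub_max_sub_mul_max_sub {s τ : ℝ} (hτ : τ ≠ 0) :
    τ⁻¹ * (s - max (s - τ) 0) * max (s - τ) 0 = max (s - τ) 0 := by
  rcases le_total s τ with h | h
  · rw [max_eq_right (by linarith), mul_zero]
  · rw [max_eq_left (by linarith), sub_sub_cancel, inv_mul_cancel₀ hτ, one_mul]

end

/-- Singular value soft-thresholding `D_τ(Y) = U max(Σ - τ, 0) Vᵀ` is the unique minimizer
of `Z ↦ τ‖Z‖_* + (1/2)‖Z - Y‖_F²`, for any SVD `Y = U Σ Vᵀ`. -/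
theorem svt_is_prox_of_nuclear_norm
    {m n : ℕ} (τ : ℝ) (hτ : 0 < τ)
    (U : Matrix (Fin m) (Fin m) ℝ) (hU : Uᵀ * U = 1)
    (V : Matrix (Fin n) (Fin n) ℝ) (hV : Vᵀ * V = 1)
    (S : Matrix (Fin m) (Fin n) ℝ)
    (hSdiag : ∀ (i : Fin m) (j : Fin n), (i : ℕ) ≠ (j : ℕ) → S i j = 0)
    (hSpos : ∀ (i : Fin m) (j : Fin n), 0 ≤ S i j)
    (Y : Matrix (Fin m) (Fin n) ℝ) (hY : Y = U * S * Vᵀ)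
    (T : Matrix (Fin m) (Fin n) ℝ)
    (hT : ∀ (i : Fin m) (j : Fin n), T i j = if (i : ℕ) = (j : ℕ) then max (S i j - τ) 0 else 0) :
    (∀ Z : Matrix (Fin m) (Fin n) ℝ,
        τ * nuclearNorm (U * T * Vᵀ) + (1 / 2) * frobSq (U * T * Vᵀ - Y) ≤
          τ * nuclearNorm Z + (1 / 2) * frobSq (Z - Y)) ∧
      ∀ Z : Matrix (Fin m) (Fin n) ℝ,
        (∀ Z', τ * nuclearNorm Z + (1 / 2) * frobSq (Z - Y) ≤
                τ * nuclearNorm Z' + (1 / 2) * frobSq (Z' - Y)) →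
        Z = U * T * Vᵀ := by
  set W := U * T * Vᵀ
  set D := τ⁻¹ • (S - T)
  have hTdiag : T.IsRectDiag := fun i j h => by rw [hT, if_neg h]
  have hDdiag : D.IsRectDiag := fun i j h => by simp [D, hSdiag i j h, hTdiag i j h]
  have hD1 (i j) : |D i j| ≤ 1 := by
    by_cases h : (i : ℕ) = j
    · simpa [D, hT, h] using abs_inv_mul_sub_max_sub_le_one (hSpos i j) hτ
    · simp [hDdiag i j h]
  have hDT (i j) : D i j * T i j = T i j := by
    by_cases h : (i : ℕ) = j
    · simpa [D, hT, h] using inv_mul_sub_max_sub_mul_max_sub (s := S i j) hτ.ne'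
    · simp [hTdiag i j h]
  have hTnonneg (i j) : 0 ≤ T i j := by
    rw [hT]
    split_ifs
    exacts [le_max_right _ _, le_rfl]
  have hGW : ((U * D * Vᵀ)ᵀ * W).trace = nuclearNorm W := by
    rw [transpose_mul_orthogonal_conj hU, trace_mul_cycle, ← Matrix.mul_assoc, hV, Matrix.one_mul,
      nuclearNorm_orthogonal_conj hU hV, hTdiag.nuclearNorm_eq, trace_transpose_mul_eq_sum]
    simp only [hDT, abs_of_nonneg (hTnonneg _ _)]
  have hYW : Y - W = τ • (U * D * Vᵀ) := by
    rw [hY, Matrix.mul_smul, Matrix.smul_mul, smul_smul, mul_inv_cancel₀ hτ.ne', one_smul,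
      ← Matrix.sub_mul, ← Matrix.mul_sub]
  have hgrowth := add_half_frobSq_le_of_subgradient nuclearNorm hτ.le
    (trace_transpose_mul_le_nuclearNorm (posSemidef_one_sub_transpose_mul_self_orthogonal_conj
      hU hV (hDdiag.posSemidef_one_sub_transpose_mul_self hD1))) hGW hYW
  refine ⟨fun Z => by linarith [hgrowth Z, frobSq_nonneg (Z - W)], fun Z hZ => ?_⟩
  have hZW : frobSq (Z - W) = 0 := le_antisymm (by linarith [hgrowth Z, hZ W]) (frobSq_nonneg _)
  exact sub_eq_zero.mp (frobSq_eq_zero_iff.mp hZW)
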